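/- Let ω ∈ ℝ and let φ : ℝ³ → [0, ∞] be measurable. Then ∫_{|ζ| < 1} ( ∫₀^∞ e^{−|ζ|² t} |ζ| φ(O(ωt)ζ) dt )² dζ ≤ ∫_{|ζ| < 1} φ(ζ)² |ζ|^{−2} dζ (an inequality in [0, ∞]). -/

import Mathlib

open MeasureTheory
open scoped ENNReal

noncomputable section

abbrev E3 := EuclideanSpace ℝ (Fin 3)

/-- The rotation `O(θ)` about the first coordinate axis, with rows
`(1,0,0), (0,cos θ, -sin θ), (0, sin θ, cos θ)`, acting on `ℝ³`. -/
def Orot (θ : ℝ) (x : E3) : E3 :=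
  (WithLp.equiv 2 (Fin 3 → ℝ)).symm
    ![x 0, Real.cos θ * x 1 - Real.sin θ * x 2, Real.sin θ * x 1 + Real.cos θ * x 2]

lemma Orot_apply (θ : ℝ) (x : E3) (i : Fin 3) :
    Orot θ x i = ![x 0, Real.cos θ * x 1 - Real.sin θ * x 2,
      Real.sin θ * x 1 + Real.cos θ * x 2] i := rfl

lemma norm_Orot (θ : ℝ) (x : E3) : ‖Orot θ x‖ = ‖x‖ := by
  rw [EuclideanSpace.norm_eq, EuclideanSpace.norm_eq]
  congr 1
  simp only [Orot_apply, Fin.sum_univ_three, Real.norm_eq_abs, sq_abs]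
  simp only [Matrix.cons_val_zero, Matrix.cons_val_one, Matrix.head_cons,
    Matrix.cons_val_two, Matrix.tail_cons]
  have h := Real.sin_sq_add_cos_sq θ
  nlinarith [h]

lemma Orot_Orot (θ : ℝ) (x : E3) : Orot (-θ) (Orot θ x) = x := by
  have h := Real.sin_sq_add_cos_sq θ
  ext i
  fin_cases i
  · simp [Orot_apply]
  · simp [Orot_apply]; linear_combination x 1 * h
  · simp [Orot_apply]; linear_combination x 2 * h

def OrotLI (θ : ℝ) : E3 ≃ₗᵢ[ℝ] E3 where
  toFun := Orot θ
  invFun := Orot (-θ)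
  left_inv := Orot_Orot θ
  right_inv := fun x => by simpa using Orot_Orot (-θ) x
  map_add' := fun x y => by
    ext i
    fin_cases i <;> simp [Orot_apply] <;> ring
  map_smul' := fun c x => by
    ext i
    fin_cases i <;> simp [Orot_apply] <;> ring
  norm_map' := norm_Orot θ

lemma Orot_measurePreserving (θ : ℝ) : MeasurePreserving (Orot θ) (volume : Measure E3) volume :=
  (OrotLI θ).measurePreserving

lemma lintegral_ball_comp_Orot (θ : ℝ) (f : E3 → ℝ≥0∞) (hf : Measurable f) :
    ∫⁻ ζ in {ζ : E3 | ‖ζ‖ < 1}, f (Orot θ ζ) = ∫⁻ ζ in {ζ : E3 | ‖ζ‖ < 1}, f ζ := by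
  have hs : MeasurableSet {ζ : E3 | ‖ζ‖ < 1} := measurableSet_lt (by fun_prop) measurable_const
  rw [← lintegral_indicator hs, ← lintegral_indicator hs]
  have : ∀ ζ, ({ζ : E3 | ‖ζ‖ < 1}).indicator (fun ζ => f (Orot θ ζ)) ζ
      = ({ζ : E3 | ‖ζ‖ < 1}).indicator f (Orot θ ζ) := by
    intro ζ
    simp only [Set.indicator_apply, Set.mem_setOf_eq, norm_Orot]
  simp_rw [this]
  exact (Orot_measurePreserving θ).lintegral_comp (hf.indicator hs)

lemma lint_exp {r : ℝ} (hr : 0 < r) :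
    ∫⁻ t in Set.Ioi (0 : ℝ), ENNReal.ofReal (Real.exp (-(r * t))) = ENNReal.ofReal r⁻¹ := by
  have hint : IntegrableOn (fun t : ℝ => Real.exp (-(r * t))) (Set.Ioi 0) := by
    simpa [neg_mul] using exp_neg_integrableOn_Ioi 0 hr
  rw [← ofReal_integral_eq_lintegral_ofReal hint
    (Filter.Eventually.of_forall fun t => (Real.exp_pos _).le)]
  congr 1
  have := integral_comp_mul_left_Ioi (fun x : ℝ => Real.exp (-x)) 0 hr
  simp only [mul_zero, smul_eq_mul] at this
  rw [this, integral_exp_neg_Ioi]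
  simp

lemma rpow_half_sq (X : ℝ≥0∞) : (X ^ ((1:ℝ)/2)) ^ (2:ℕ) = X := by
  rw [← ENNReal.rpow_natCast (X ^ ((1:ℝ)/2)) 2, ← ENNReal.rpow_mul]
  norm_num

lemma cauchy_schwarz {α : Type*} [MeasurableSpace α] (μ : Measure α)
    (w : α → ℝ) (hw : ∀ t, 0 ≤ w t) (hwm : Measurable w) (g : α → ℝ≥0∞) (hg : Measurable g) :
    (∫⁻ t, ENNReal.ofReal (w t) * g t ∂μ) ^ 2
      ≤ (∫⁻ t, ENNReal.ofReal (w t) ∂μ) * ∫⁻ t, ENNReal.ofReal (w t) * g t ^ 2 ∂μ := by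
  set f : α → ℝ≥0∞ := fun t => ENNReal.ofReal (Real.sqrt (w t)) with hf
  have hfm : Measurable f := by fun_prop
  have hf2 : ∀ t, f t * f t = ENNReal.ofReal (w t) := fun t => by
    rw [← ENNReal.ofReal_mul (Real.sqrt_nonneg _), Real.mul_self_sqrt (hw t)]
  have hpq : Real.HolderConjugate 2 2 := Real.HolderConjugate.two_two
  have hCS := ENNReal.lintegral_mul_le_Lp_mul_Lq μ hpq hfm.aemeasurable
    (hfm.mul hg).aemeasurable
  have key : (∫⁻ t, f t * (f t * g t) ∂μ)
      ≤ (∫⁻ t, f t ^ (2:ℝ) ∂μ) ^ ((1:ℝ)/2) * (∫⁻ t, (f t * g t) ^ (2:ℝ) ∂μ) ^ ((1:ℝ)/2) := hCS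
  calc (∫⁻ t, ENNReal.ofReal (w t) * g t ∂μ) ^ 2
      = (∫⁻ t, f t * (f t * g t) ∂μ) ^ 2 := by
        congr 1; apply lintegral_congr; intro t; rw [← mul_assoc, hf2]
    _ ≤ ((∫⁻ t, f t ^ (2:ℝ) ∂μ) ^ ((1:ℝ)/2) * (∫⁻ t, (f t * g t) ^ (2:ℝ) ∂μ) ^ ((1:ℝ)/2)) ^ 2 := by
        exact pow_le_pow_left' key 2
    _ = (∫⁻ t, f t ^ (2:ℝ) ∂μ) * ∫⁻ t, (f t * g t) ^ (2:ℝ) ∂μ := by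
        rw [mul_pow, rpow_half_sq, rpow_half_sq]
    _ = (∫⁻ t, ENNReal.ofReal (w t) ∂μ) * ∫⁻ t, ENNReal.ofReal (w t) * g t ^ 2 ∂μ := by
        congr 1 <;> apply lintegral_congr <;> intro t
        · rw [show ((2:ℝ)) = ((2:ℕ):ℝ) by norm_num, ENNReal.rpow_natCast, sq, hf2]
        · rw [show ((2:ℝ)) = ((2:ℕ):ℝ) by norm_num, ENNReal.rpow_natCast, mul_pow, sq (f t), hf2]

lemma continuous_orot (ω : ℝ) : Continuous fun p : E3 × ℝ => Orot (ω * p.2) p.1 := by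
  apply Continuous.comp (PiLp.continuous_toLp 2 (fun _ : Fin 3 => ℝ))
  apply continuous_pi
  intro i
  have h0 : Continuous fun p : E3 × ℝ => p.1 0 :=
    (continuous_apply (0 : Fin 3)).comp ((PiLp.continuous_ofLp 2 _).comp continuous_fst)
  have h1 : Continuous fun p : E3 × ℝ => p.1 1 :=
    (continuous_apply (1 : Fin 3)).comp ((PiLp.continuous_ofLp 2 _).comp continuous_fst)
  have h2 : Continuous fun p : E3 × ℝ => p.1 2 :=
    (continuous_apply (2 : Fin 3)).comp ((PiLp.continuous_ofLp 2 _).comp continuous_fst)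
  fin_cases i <;> simp <;> fun_prop

lemma ptwise (ω : ℝ) (φ : E3 → ℝ≥0∞) (hφ : Measurable φ) (ζ : E3) :
    (∫⁻ t in Set.Ioi (0 : ℝ),
        ENNReal.ofReal (Real.exp (-(‖ζ‖ ^ 2 * t)) * ‖ζ‖) * φ (Orot (ω * t) ζ)) ^ 2
      ≤ ∫⁻ t in Set.Ioi (0 : ℝ),
          ENNReal.ofReal (Real.exp (-(‖ζ‖ ^ 2 * t))) * φ (Orot (ω * t) ζ) ^ 2 := by
  rcases eq_or_ne ζ 0 with rfl | hζ
  · simp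
  · have hr : (0:ℝ) < ‖ζ‖ ^ 2 := pow_pos (norm_pos_iff.mpr hζ) 2
    have hgm : Measurable fun t : ℝ => φ (Orot (ω * t) ζ) := by
      apply hφ.comp
      exact ((continuous_orot ω).comp (continuous_const.prodMk continuous_id)).measurable
    have hem : Measurable fun t : ℝ => ENNReal.ofReal (Real.exp (-(‖ζ‖ ^ 2 * t))) :=
      ENNReal.measurable_ofReal.comp (Real.continuous_exp.comp (by continuity)).measurable
    have hwm : Measurable fun t : ℝ => ENNReal.ofReal (Real.exp (-(‖ζ‖ ^ 2 * t)) * ‖ζ‖) :=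
      ENNReal.measurable_ofReal.comp
        ((Real.continuous_exp.comp (by continuity)).mul continuous_const).measurable
    have hwrm : Measurable fun t : ℝ => Real.exp (-(‖ζ‖ ^ 2 * t)) * ‖ζ‖ :=
      ((Real.continuous_exp.comp (by continuity)).mul continuous_const).measurable
    have hCS := cauchy_schwarz (volume.restrict (Set.Ioi (0:ℝ)))
      (fun t => Real.exp (-(‖ζ‖ ^ 2 * t)) * ‖ζ‖)
      (fun t => mul_nonneg (Real.exp_pos _).le (norm_nonneg _)) hwrm
      (fun t => φ (Orot (ω * t) ζ)) hgm
    refine hCS.trans ?_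
    have hw : ∫⁻ t in Set.Ioi (0:ℝ), ENNReal.ofReal (Real.exp (-(‖ζ‖ ^ 2 * t)) * ‖ζ‖)
        = ENNReal.ofReal ((‖ζ‖ ^ 2)⁻¹ * ‖ζ‖) := by
      simp_rw [ENNReal.ofReal_mul (Real.exp_pos _).le]
      rw [lintegral_mul_const _ hem, lint_exp hr,
        ENNReal.ofReal_mul (by positivity)]
    rw [hw, ← lintegral_const_mul (f := fun t => ENNReal.ofReal (Real.exp (-(‖ζ‖ ^ 2 * t)) * ‖ζ‖) * φ (Orot (ω * t) ζ) ^ 2) _ (hwm.mul (hgm.pow_const 2))]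
    apply lintegral_mono
    intro t
    dsimp only
    rw [← mul_assoc, ← ENNReal.ofReal_mul (by positivity)]
    apply mul_le_mul_left
    apply ENNReal.ofReal_le_ofReal
    have : (‖ζ‖ ^ 2)⁻¹ * ‖ζ‖ * (Real.exp (-(‖ζ‖ ^ 2 * t)) * ‖ζ‖)
        = Real.exp (-(‖ζ‖ ^ 2 * t)) := by
      field_simp
    rw [this]

/-- Low-frequency smoothing estimate:
`∫_{|ζ|<1} (∫₀^∞ e^{-|ζ|²t} |ζ| φ(O(ωt)ζ) dt)² dζ ≤ ∫_{|ζ|<1} φ(ζ)² |ζ|^{-2} dζ` in `[0,∞]`. -/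
theorem stmt3 (ω : ℝ) (φ : E3 → ℝ≥0∞) (hφ : Measurable φ) :
    (∫⁻ ζ in {ζ : E3 | ‖ζ‖ < 1},
        (∫⁻ t in Set.Ioi (0 : ℝ),
            ENNReal.ofReal (Real.exp (-(‖ζ‖ ^ 2 * t)) * ‖ζ‖) * φ (Orot (ω * t) ζ)) ^ 2)
      ≤ ∫⁻ ζ in {ζ : E3 | ‖ζ‖ < 1}, φ ζ ^ 2 / ENNReal.ofReal (‖ζ‖ ^ 2) := by

  have hOm : Measurable fun p : E3 × ℝ => Orot (ω * p.2) p.1 := (continuous_orot ω).measurable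
  have hFm : Measurable fun p : E3 × ℝ =>
      ENNReal.ofReal (Real.exp (-(‖p.1‖ ^ 2 * p.2))) * φ (Orot (ω * p.2) p.1) ^ 2 := by
    apply Measurable.mul
    · exact ENNReal.measurable_ofReal.comp (Real.continuous_exp.comp (by continuity)).measurable
    · exact (hφ.comp hOm).pow_const 2
  have hGm : Measurable fun p : E3 × ℝ =>
      ENNReal.ofReal (Real.exp (-(‖p.1‖ ^ 2 * p.2))) * φ p.1 ^ 2 := by
    apply Measurable.mul
    · exact ENNReal.measurable_ofReal.comp (Real.continuous_exp.comp (by continuity)).measurable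
    · exact (hφ.comp measurable_fst).pow_const 2
  calc
    (∫⁻ ζ in {ζ : E3 | ‖ζ‖ < 1},
        (∫⁻ t in Set.Ioi (0 : ℝ),
            ENNReal.ofReal (Real.exp (-(‖ζ‖ ^ 2 * t)) * ‖ζ‖) * φ (Orot (ω * t) ζ)) ^ 2)
      ≤ ∫⁻ ζ in {ζ : E3 | ‖ζ‖ < 1}, ∫⁻ t in Set.Ioi (0 : ℝ),
          ENNReal.ofReal (Real.exp (-(‖ζ‖ ^ 2 * t))) * φ (Orot (ω * t) ζ) ^ 2 :=
        lintegral_mono fun ζ => ptwise ω φ hφ ζ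
    _ = ∫⁻ t in Set.Ioi (0 : ℝ), ∫⁻ ζ in {ζ : E3 | ‖ζ‖ < 1},
          ENNReal.ofReal (Real.exp (-(‖ζ‖ ^ 2 * t))) * φ (Orot (ω * t) ζ) ^ 2 :=
        lintegral_lintegral_swap hFm.aemeasurable
    _ = ∫⁻ t in Set.Ioi (0 : ℝ), ∫⁻ ζ in {ζ : E3 | ‖ζ‖ < 1},
          ENNReal.ofReal (Real.exp (-(‖ζ‖ ^ 2 * t))) * φ ζ ^ 2 := by
        apply lintegral_congr
        intro t
        have h1 : ∀ ζ : E3,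
            ENNReal.ofReal (Real.exp (-(‖ζ‖ ^ 2 * t))) * φ (Orot (ω * t) ζ) ^ 2
              = (fun ζ : E3 => ENNReal.ofReal (Real.exp (-(‖ζ‖ ^ 2 * t))) * φ ζ ^ 2)
                  (Orot (ω * t) ζ) := by
          intro ζ
          simp only [norm_Orot]
        simp_rw [h1]
        exact lintegral_ball_comp_Orot (ω * t)
          (fun ζ : E3 => ENNReal.ofReal (Real.exp (-(‖ζ‖ ^ 2 * t))) * φ ζ ^ 2)
          ((ENNReal.measurable_ofReal.comp
            (Real.continuous_exp.comp (by continuity)).measurable).mul (hφ.pow_const 2))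
    _ = ∫⁻ ζ in {ζ : E3 | ‖ζ‖ < 1}, ∫⁻ t in Set.Ioi (0 : ℝ),
          ENNReal.ofReal (Real.exp (-(‖ζ‖ ^ 2 * t))) * φ ζ ^ 2 :=
        (lintegral_lintegral_swap hGm.aemeasurable).symm
    _ ≤ ∫⁻ ζ in {ζ : E3 | ‖ζ‖ < 1}, φ ζ ^ 2 / ENNReal.ofReal (‖ζ‖ ^ 2) := by
        apply lintegral_mono
        intro ζ
        dsimp only
        have hem : Measurable fun t : ℝ => ENNReal.ofReal (Real.exp (-(‖ζ‖ ^ 2 * t))) :=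
          ENNReal.measurable_ofReal.comp (Real.continuous_exp.comp (by continuity)).measurable
        rcases eq_or_ne ζ 0 with rfl | hζ
        · simp only [norm_zero, ENNReal.ofReal_zero]
          rcases eq_or_ne (φ 0 ^ 2) 0 with h | h
          · simp [h]
          · rw [show (0:ℝ)^2 = 0 by norm_num, ENNReal.ofReal_zero, ENNReal.div_zero h]
            exact le_top
        · have hr : (0:ℝ) < ‖ζ‖ ^ 2 := pow_pos (norm_pos_iff.mpr hζ) 2
          rw [lintegral_mul_const _ hem, lint_exp hr, ENNReal.ofReal_inv_of_pos hr,
            div_eq_mul_inv, mul_comm]
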